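/- (Hardy–Sobolev inequality.) Let p* > 0, S > 0, H > 0, θ ∈ ℝ, and let ρ be a positive smooth function on Ω. Assume the Sobolev inequality S (∫_Ω |u|^{p*} dx)^{1/p*} ≤ (∫_Ω |∇u|^p dx)^{1/p} and the weighted Hardy inequality H ∫_Ω ρ^{pθ−p} |u|^p |∇ρ|^p dx ≤ ∫_Ω ρ^{pθ} |∇u|^p dx both hold for every u ∈ C_c^1(Ω). Then, with C₂ = S·H^{1/p}/(|θ| + H^{1/p}), the weighted Sobolev inequality C₂ (∫_Ω ρ^{p*θ} |u|^{p*} dx)^{1/p*} ≤ (∫_Ω ρ^{pθ} |∇u|^p dx)^{1/p} holds for every u ∈ C_c^∞(Ω). -/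

import Mathlib

/-!
Apply the Sobolev inequality to `v = ρ^θ u`. By the product rule
`∇v = ρ^θ ∇u + θ ρ^(θ-1) u ∇ρ`, so Minkowski's inequality in `L^p` gives
`‖∇v‖_p ≤ ‖ρ^θ ∇u‖_p + |θ| ‖ρ^(θ-1) u ∇ρ‖_p`, and the weighted Hardy inequality bounds the
last norm by `H^(-1/p) ‖ρ^θ ∇u‖_p`. Hence `S ‖ρ^θ u‖_{p*} ≤ (1 + |θ| H^(-1/p)) ‖ρ^θ ∇u‖_p`.
-/

open MeasureTheory Function Set
open scoped Gradient

lemma Real.rpow_mul_rpow_of_pos {r a : ℝ} (hr : 0 < r) (ha : 0 ≤ a) (θ p : ℝ) :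
    (r ^ θ * a) ^ p = r ^ (p * θ) * a ^ p := by
  rw [Real.mul_rpow (Real.rpow_nonneg hr.le θ) ha, ← Real.rpow_mul hr.le, mul_comm θ p]

lemma div_mul_le_of_le_abs_mul_add {S A θ h a b : ℝ} (hh : 0 < h) (hha : h * a ≤ b)
    (hA : S * A ≤ |θ| * a + b) : S * h / (|θ| + h) * A ≤ b := by
  have hden : 0 < |θ| + h := by positivity
  rw [div_mul_eq_mul_div, div_le_iff₀ hden]
  nlinarith [abs_nonneg θ]

section Minkowski

variable {α : Type*} [MeasurableSpace α] {μ : Measure α} {p : ℝ}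

lemma MeasureTheory.MemLp.ofReal_integral_rpow_one_div {f : α → ℝ} (hp : 0 < p)
    (hf0 : 0 ≤ᵐ[μ] f) (hf : MemLp f (ENNReal.ofReal p) μ) :
    ENNReal.ofReal ((∫ x, f x ^ p ∂μ) ^ (1 / p)) = eLpNorm f (ENNReal.ofReal p) μ := by
  rw [hf.eLpNorm_eq_integral_rpow_norm (by simpa using hp) ENNReal.ofReal_ne_top,
    ENNReal.toReal_ofReal hp.le, one_div]
  congr 2
  exact integral_congr_ae (by filter_upwards [hf0] with x hx; rw [Real.norm_of_nonneg hx])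

lemma integral_rpow_one_div_le_add {f g h : α → ℝ} (hp : 1 ≤ p)
    (hh : AEStronglyMeasurable h μ) (hh0 : 0 ≤ᵐ[μ] h) (hf0 : 0 ≤ᵐ[μ] f)
    (hg0 : 0 ≤ᵐ[μ] g) (hle : h ≤ᵐ[μ] f + g) (hf : MemLp f (ENNReal.ofReal p) μ)
    (hg : MemLp g (ENNReal.ofReal p) μ) :
    (∫ x, h x ^ p ∂μ) ^ (1 / p) ≤
      (∫ x, f x ^ p ∂μ) ^ (1 / p) + (∫ x, g x ^ p ∂μ) ^ (1 / p) := by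
  have hp0 : 0 < p := zero_lt_one.trans_le hp
  have hnorm : ∀ᵐ x ∂μ, ‖h x‖ ≤ ‖(f + g) x‖ := by
    filter_upwards [hle, hh0, hf0, hg0] with x h1 h2 h3 h4
    rwa [Real.norm_of_nonneg h2, Pi.add_apply, Real.norm_of_nonneg (add_nonneg h3 h4)]
  have hhp : MemLp h (ENNReal.ofReal p) μ := (hf.add hg).of_le hh hnorm
  have hnonneg {k : α → ℝ} (hk : 0 ≤ᵐ[μ] k) : 0 ≤ (∫ x, k x ^ p ∂μ) ^ (1 / p) :=
    Real.rpow_nonneg (integral_nonneg_of_ae (hk.mono fun x hx => Real.rpow_nonneg hx p)) _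
  rw [← ENNReal.ofReal_le_ofReal_iff (add_nonneg (hnonneg hf0) (hnonneg hg0)),
    ENNReal.ofReal_add (hnonneg hf0) (hnonneg hg0), hhp.ofReal_integral_rpow_one_div hp0 hh0,
    hf.ofReal_integral_rpow_one_div hp0 hf0, hg.ofReal_integral_rpow_one_div hp0 hg0]
  exact (eLpNorm_mono_ae hnorm).trans
    (eLpNorm_add_le hf.1 hg.1 (by simpa using ENNReal.ofReal_le_ofReal hp))

end Minkowski

lemma ContDiffOn.contDiff_of_tsupport_subset {𝕜 E F : Type*} [NontriviallyNormedField 𝕜]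
    [NormedAddCommGroup E] [NormedSpace 𝕜 E] [NormedAddCommGroup F] [NormedSpace 𝕜 F]
    {n : WithTop ℕ∞} {f : E → F} {s : Set E} (hf : ContDiffOn 𝕜 n f s) (hs : IsOpen s)
    (hfs : tsupport f ⊆ s) : ContDiff 𝕜 n f :=
  contDiff_of_contDiffOn_union_of_isOpen hf
    (contDiffOn_const.congr fun _ hx => image_eq_zero_of_notMem_tsupport hx)
    (eq_univ_of_univ_subset fun x _ => (em (x ∈ tsupport f)).imp (@hfs x) id) hs
    (isClosed_tsupport f).isOpen_compl

lemma ContinuousOn.memLp_of_support_subset_tsupport {X F G : Type*} [TopologicalSpace X]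
    [MeasurableSpace X] [OpensMeasurableSpace X] [NormedAddCommGroup F] [Zero G]
    {μ : Measure X} [IsFiniteMeasureOnCompacts μ] {q : ENNReal} {s : Set X} {w : X → F}
    {f : X → G}
    (hw : ContinuousOn w s) (hs : IsOpen s) (hf : HasCompactSupport f) (hfs : tsupport f ⊆ s)
    (hwf : support w ⊆ tsupport f) : MemLp w q μ :=
  (hw.continuous_of_tsupport_subset hs
    ((closure_minimal hwf (isClosed_tsupport f)).trans hfs)).memLp_of_hasCompactSupport
    (hf.mono' hwf)

section Gradient

variable {E : Type*} [NormedAddCommGroup E] [InnerProductSpace ℝ E] [CompleteSpace E]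

lemma norm_gradient (f : E → ℝ) (x : E) : ‖∇ f x‖ = ‖fderiv ℝ f x‖ :=
  (InnerProductSpace.toDual ℝ E).symm.norm_map _

lemma gradient_of_notMem_tsupport {f : E → ℝ} {x : E} (hx : x ∉ tsupport f) :
    ∇ f x = 0 := by
  simp [gradient, fderiv_of_notMem_tsupport ℝ hx]

lemma ContDiffOn.continuousOn_gradient {f : E → ℝ} {s : Set E} (hf : ContDiffOn ℝ 1 f s)
    (hs : IsOpen s) : ContinuousOn (∇ f) s :=
  (InnerProductSpace.toDual ℝ E).symm.continuous.comp_continuousOn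
    (hf.continuousOn_fderiv_of_isOpen hs le_rfl)

lemma norm_gradient_rpow_mul_le {ρ u : E → ℝ} {x : E} (θ : ℝ)
    (hρ : DifferentiableAt ℝ ρ x) (hρx : 0 < ρ x) (hu : DifferentiableAt ℝ u x) :
    ‖∇ (fun y => ρ y ^ θ * u y) x‖ ≤
      |θ| * (ρ x ^ (θ - 1) * (|u x| * ‖∇ ρ x‖)) + ρ x ^ θ * ‖∇ u x‖ := by
  have hderiv : HasFDerivAt (fun y => ρ y ^ θ * u y)
      (ρ x ^ θ • fderiv ℝ u x + u x • ((θ * ρ x ^ (θ - 1)) • fderiv ℝ ρ x)) x :=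
    (hρ.hasFDerivAt.rpow_const (Or.inl hρx.ne')).mul hu.hasFDerivAt
  rw [norm_gradient, hderiv.fderiv, norm_gradient, norm_gradient, add_comm]
  refine (norm_add_le _ _).trans_eq ?_
  simp only [norm_smul, Real.norm_eq_abs, abs_mul, abs_of_pos (Real.rpow_pos_of_pos hρx _)]
  ring

variable [MeasurableSpace E] [BorelSpace E] {μ : Measure E} [IsFiniteMeasureOnCompacts μ]

variable {Ω : Set E} {ρ u : E → ℝ} {p : ℝ}

lemma integral_norm_gradient_rpow_mul_le_add (θ : ℝ) (hp : 1 ≤ p) (hΩ : IsOpen Ω)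
    (hρ : ContDiffOn ℝ 1 ρ Ω) (hρ_pos : ∀ x ∈ Ω, 0 < ρ x) (hu : ContDiffOn ℝ 1 u Ω)
    (hu_supp : HasCompactSupport u) (hu_sub : tsupport u ⊆ Ω) :
    (∫ x in Ω, ‖∇ (fun y => ρ y ^ θ * u y) x‖ ^ p ∂μ) ^ (1 / p) ≤
      (∫ x in Ω, (|θ| * (ρ x ^ (θ - 1) * (|u x| * ‖∇ ρ x‖))) ^ p ∂μ) ^ (1 / p) +
        (∫ x in Ω, (ρ x ^ θ * ‖∇ u x‖) ^ p ∂μ) ^ (1 / p) := by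
  have hρ_rpow (t : ℝ) : ContinuousOn (fun x => ρ x ^ t) Ω :=
    hρ.continuousOn.rpow_const fun x hx => Or.inl (hρ_pos x hx).ne'
  have hF : MemLp (fun x => |θ| * (ρ x ^ (θ - 1) * (|u x| * ‖∇ ρ x‖)))
      (ENNReal.ofReal p) (μ.restrict Ω) := by
    refine (ContinuousOn.memLp_of_support_subset_tsupport ?_ hΩ hu_supp hu_sub ?_).restrict _
    · exact continuousOn_const.mul ((hρ_rpow _).mul
        (hu.continuousOn.abs.mul (hρ.continuousOn_gradient hΩ).norm))
    · intro x hx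
      by_contra hxu
      simp [image_eq_zero_of_notMem_tsupport hxu] at hx
  have hG : MemLp (fun x => ρ x ^ θ * ‖∇ u x‖) (ENNReal.ofReal p) (μ.restrict Ω) := by
    refine (ContinuousOn.memLp_of_support_subset_tsupport ?_ hΩ hu_supp hu_sub ?_).restrict _
    · exact (hρ_rpow _).mul (hu.continuousOn_gradient hΩ).norm
    · intro x hx
      by_contra hxu
      simp [gradient_of_notMem_tsupport hxu] at hx
  have hv : ContDiffOn ℝ 1 (fun y => ρ y ^ θ * u y) Ω :=
    (hρ.rpow_const_of_ne fun x hx => (hρ_pos x hx).ne').mul hu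
  refine integral_rpow_one_div_le_add hp
    ((hv.continuousOn_gradient hΩ).norm.aestronglyMeasurable hΩ.measurableSet)
    (ae_of_all _ fun x => norm_nonneg _)
    (ae_restrict_of_forall_mem hΩ.measurableSet fun x hx => ?_)
    (ae_restrict_of_forall_mem hΩ.measurableSet fun x hx => ?_)
    (ae_restrict_of_forall_mem hΩ.measurableSet fun x hx => ?_) hF hG
  · have := Real.rpow_nonneg (hρ_pos x hx).le (θ - 1)
    positivity
  · have := Real.rpow_nonneg (hρ_pos x hx).le θ
    positivity
  · have hdiff {f : E → ℝ} (hf : ContDiffOn ℝ 1 f Ω) : DifferentiableAt ℝ f x :=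
      (hf.differentiableOn one_ne_zero).differentiableAt (hΩ.mem_nhds hx)
    exact norm_gradient_rpow_mul_le θ (hdiff hρ) (hρ_pos x hx) (hdiff hu)

lemma integral_norm_gradient_rpow_mul_le (θ : ℝ) (hp : 1 ≤ p) (hΩ : IsOpen Ω)
    (hρ : ContDiffOn ℝ 1 ρ Ω) (hρ_pos : ∀ x ∈ Ω, 0 < ρ x) (hu : ContDiffOn ℝ 1 u Ω)
    (hu_supp : HasCompactSupport u) (hu_sub : tsupport u ⊆ Ω) :
    (∫ x in Ω, ‖∇ (fun y => ρ y ^ θ * u y) x‖ ^ p ∂μ) ^ (1 / p) ≤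
      |θ| * (∫ x in Ω, ρ x ^ (p * θ - p) * |u x| ^ p * ‖∇ ρ x‖ ^ p ∂μ) ^ (1 / p) +
        (∫ x in Ω, ρ x ^ (p * θ) * ‖∇ u x‖ ^ p ∂μ) ^ (1 / p) := by
  have hF : ∫ x in Ω, (|θ| * (ρ x ^ (θ - 1) * (|u x| * ‖∇ ρ x‖))) ^ p ∂μ =
      |θ| ^ p * ∫ x in Ω, ρ x ^ (p * θ - p) * |u x| ^ p * ‖∇ ρ x‖ ^ p ∂μ := by
    rw [← integral_const_mul]
    refine setIntegral_congr_fun hΩ.measurableSet fun x hx => ?_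
    have := Real.rpow_nonneg (hρ_pos x hx).le (θ - 1)
    rw [Real.mul_rpow (abs_nonneg θ) (by positivity),
      Real.rpow_mul_rpow_of_pos (hρ_pos x hx) (by positivity),
      Real.mul_rpow (abs_nonneg _) (norm_nonneg _), show p * (θ - 1) = p * θ - p by ring]
    ring
  have hG : ∫ x in Ω, (ρ x ^ θ * ‖∇ u x‖) ^ p ∂μ =
      ∫ x in Ω, ρ x ^ (p * θ) * ‖∇ u x‖ ^ p ∂μ :=
    setIntegral_congr_fun hΩ.measurableSet fun x hx =>
      Real.rpow_mul_rpow_of_pos (hρ_pos x hx) (norm_nonneg _) θ p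
  have hI : 0 ≤ ∫ x in Ω, ρ x ^ (p * θ - p) * |u x| ^ p * ‖∇ ρ x‖ ^ p ∂μ :=
    setIntegral_nonneg hΩ.measurableSet fun x hx => by
      have := Real.rpow_nonneg (hρ_pos x hx).le (p * θ - p)
      positivity
  have key :=
    integral_norm_gradient_rpow_mul_le_add (μ := μ) θ hp hΩ hρ hρ_pos hu hu_supp hu_sub
  rwa [hF, hG, Real.mul_rpow (by positivity) hI, ← Real.rpow_mul (abs_nonneg θ),
    mul_one_div_cancel (zero_lt_one.trans_le hp).ne', Real.rpow_one] at key

end Gradient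

theorem stmt12_general {N : ℕ} (p : ℝ) (hp : 1 < p)
    (Ω : Set (EuclideanSpace ℝ (Fin N))) (hΩ : IsOpen Ω)
    (pstar S H θ : ℝ) (hH : 0 < H)
    (ρ : EuclideanSpace ℝ (Fin N) → ℝ)
    (hρ : ContDiffOn ℝ (⊤ : ℕ∞) ρ Ω)
    (hρ_pos : ∀ x ∈ Ω, 0 < ρ x)
    (hSob : ∀ u : EuclideanSpace ℝ (Fin N) → ℝ,
      ContDiff ℝ 1 u → HasCompactSupport u → tsupport u ⊆ Ω →
      S * (∫ x in Ω, |u x| ^ pstar) ^ (1 / pstar) ≤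
        (∫ x in Ω, ‖gradient u x‖ ^ p) ^ (1 / p))
    (hHardy : ∀ u : EuclideanSpace ℝ (Fin N) → ℝ,
      ContDiff ℝ 1 u → HasCompactSupport u → tsupport u ⊆ Ω →
      H * ∫ x in Ω, ρ x ^ (p * θ - p) * |u x| ^ p * ‖gradient ρ x‖ ^ p ≤
        ∫ x in Ω, ρ x ^ (p * θ) * ‖gradient u x‖ ^ p)
    (C₂ : ℝ) (hC₂ : C₂ = S * H ^ (1 / p) / (|θ| + H ^ (1 / p)))
    (u : EuclideanSpace ℝ (Fin N) → ℝ)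
    (hu : ContDiff ℝ (⊤ : ℕ∞) u) (hu_supp : HasCompactSupport u)
    (hu_sub : tsupport u ⊆ Ω) :
    C₂ * (∫ x in Ω, ρ x ^ (pstar * θ) * |u x| ^ pstar) ^ (1 / pstar) ≤
      (∫ x in Ω, ρ x ^ (p * θ) * ‖gradient u x‖ ^ p) ^ (1 / p) := by
  have hρ1 : ContDiffOn ℝ 1 ρ Ω := hρ.of_le (by exact_mod_cast le_top)
  have hu1 : ContDiff ℝ 1 u := hu.of_le (by exact_mod_cast le_top)
  set v := fun y => ρ y ^ θ * u y
  have hv_sub : tsupport v ⊆ Ω := tsupport_mul_subset_right.trans hu_sub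
  have hv : ContDiff ℝ 1 v :=
    ((hρ1.rpow_const_of_ne fun x hx => (hρ_pos x hx).ne').mul
      hu1.contDiffOn).contDiff_of_tsupport_subset hΩ hv_sub
  have hv_pstar : ∫ x in Ω, |v x| ^ pstar = ∫ x in Ω, ρ x ^ (pstar * θ) * |u x| ^ pstar :=
    setIntegral_congr_fun hΩ.measurableSet fun x hx => by
      rw [abs_mul, abs_of_pos (Real.rpow_pos_of_pos (hρ_pos x hx) θ),
        Real.rpow_mul_rpow_of_pos (hρ_pos x hx) (abs_nonneg _)]
  have hSob_v := hSob v hv hu_supp.mul_left hv_sub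
  rw [hv_pstar] at hSob_v
  have hgrad_v := integral_norm_gradient_rpow_mul_le (μ := volume) θ hp.le hΩ hρ1 hρ_pos
    hu1.contDiffOn hu_supp hu_sub
  have hI : 0 ≤ ∫ x in Ω, ρ x ^ (p * θ - p) * |u x| ^ p * ‖∇ ρ x‖ ^ p :=
    setIntegral_nonneg hΩ.measurableSet fun x hx => by
      have := Real.rpow_nonneg (hρ_pos x hx).le (p * θ - p); positivity
  have hHardy_root := Real.rpow_le_rpow (mul_nonneg hH.le hI) (hHardy u hu1 hu_supp hu_sub)
    (one_div_nonneg.mpr (zero_le_one.trans hp.le))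
  rw [Real.mul_rpow hH.le hI] at hHardy_root
  rw [hC₂]
  exact div_mul_le_of_le_abs_mul_add (Real.rpow_pos_of_pos hH _) hHardy_root (hSob_v.trans hgrad_v)

theorem stmt12 {N : ℕ} (hN : 1 ≤ N) (p : ℝ) (hp : 1 < p)
    (Ω : Set (EuclideanSpace ℝ (Fin N))) (hΩ : IsOpen Ω)
    (pstar S H θ : ℝ) (hpstar : 0 < pstar) (hS : 0 < S) (hH : 0 < H)
    (ρ : EuclideanSpace ℝ (Fin N) → ℝ)
    (hρ : ContDiffOn ℝ (⊤ : ℕ∞) ρ Ω)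
    (hρ_pos : ∀ x ∈ Ω, 0 < ρ x)
    (hSob : ∀ u : EuclideanSpace ℝ (Fin N) → ℝ,
      ContDiff ℝ 1 u → HasCompactSupport u → tsupport u ⊆ Ω →
      S * (∫ x in Ω, |u x| ^ pstar) ^ (1 / pstar) ≤
        (∫ x in Ω, ‖gradient u x‖ ^ p) ^ (1 / p))
    (hHardy : ∀ u : EuclideanSpace ℝ (Fin N) → ℝ,
      ContDiff ℝ 1 u → HasCompactSupport u → tsupport u ⊆ Ω →
      H * ∫ x in Ω, ρ x ^ (p * θ - p) * |u x| ^ p * ‖gradient ρ x‖ ^ p ≤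
        ∫ x in Ω, ρ x ^ (p * θ) * ‖gradient u x‖ ^ p)
    (C₂ : ℝ) (hC₂ : C₂ = S * H ^ (1 / p) / (|θ| + H ^ (1 / p)))
    (u : EuclideanSpace ℝ (Fin N) → ℝ)
    (hu : ContDiff ℝ (⊤ : ℕ∞) u) (hu_supp : HasCompactSupport u)
    (hu_sub : tsupport u ⊆ Ω) :
    C₂ * (∫ x in Ω, ρ x ^ (pstar * θ) * |u x| ^ pstar) ^ (1 / pstar) ≤
      (∫ x in Ω, ρ x ^ (p * θ) * ‖gradient u x‖ ^ p) ^ (1 / p) :=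
  stmt12_general p hp Ω hΩ pstar S H θ hH ρ hρ hρ_pos hSob hHardy C₂ hC₂ u hu hu_supp hu_sub
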